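/- Let (A_N, B_N, C_N), N = 1, 2, …, be random vectors in ℝ^p × ℝ^m × ℝ^k converging in distribution to (A, B, C). Let φ_N, φ : ℝ^m × ℝ^k → {0, 1} be Borel-measurable functions such that, for almost every point (b, c) under the law of (B, C), φ_N converges continuously to φ at (b, c) (i.e., φ_N(b_N, c_N) → φ(b, c) for every sequence (b_N, c_N) → (b, c)), and suppose P(φ(B, C) = 1) > 0. Then P(φ_N(B_N, C_N) = 1) → P(φ(B, C) = 1), and the conditional distribution of (A_N, B_N) given the event {φ_N(B_N, C_N) = 1} converges weakly to the conditional distribution of (A, B) given {φ(B, C) = 1}. -/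

import Mathlib

/-! The proof rests on the extended continuous mapping theorem: if `μ_N ⇒ μ` and `h_N → h`
continuously at `μ`-almost every point, then `μ_N ∘ h_N⁻¹ ⇒ μ ∘ h⁻¹`. For a closed `F`, every
point of `⋂_M closure (⋃_{N ≥ M} h_N⁻¹ F)` at which `h_N` converges continuously lies in
`h⁻¹ F`, so the portmanteau bound for these closed sets gives
`limsup μ_N (h_N⁻¹ F) ≤ μ (h⁻¹ F)`. Applied to `x ↦ (x, φ_N x)` and tested against
`f x * clamp t`, which is `f` times the indicator of `{φ_N = 1}` since `φ_N` is `{0, 1}`-valued,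
it gives `∫_{φ_N = 1} f dμ_N → ∫_{φ = 1} f dμ`; `f = 1` gives the acceptance probabilities,
and dividing by them gives the conditional laws. -/

open MeasureTheory ProbabilityTheory Matrix Filter
open scoped NNReal Topology ENNReal

noncomputable section

def TendstoWeakly {E : Type*} [MeasurableSpace E] [TopologicalSpace E]
    (μs : ℕ → Measure E) (μ : Measure E) : Prop :=
  ∀ f : BoundedContinuousFunction E ℝ,
    Tendsto (fun N => ∫ x, f x ∂(μs N)) atTop (𝓝 (∫ x, f x ∂μ))

open scoped BoundedContinuousFunction

def ConvergesContinuouslyAt {X Y : Type*} [TopologicalSpace X] [TopologicalSpace Y]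
    (fs : ℕ → X → Y) (f : X → Y) (x : X) : Prop :=
  ∀ xs : ℕ → X, Tendsto xs atTop (𝓝 x) → Tendsto (fun N => fs N (xs N)) atTop (𝓝 (f x))

section ConvergesContinuouslyAt

variable {X Y Z : Type*} [TopologicalSpace X] [TopologicalSpace Y] [TopologicalSpace Z]

theorem ContinuousAt.convergesContinuouslyAt {f : X → Y} {x : X} (hf : ContinuousAt f x) :
    ConvergesContinuouslyAt (fun _ => f) f x :=
  fun _ hxs => hf.tendsto.comp hxs

theorem ConvergesContinuouslyAt.prodMk {fs : ℕ → X → Y} {f : X → Y} {gs : ℕ → X → Z}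
    {g : X → Z} {x : X} (hf : ConvergesContinuouslyAt fs f x)
    (hg : ConvergesContinuouslyAt gs g x) :
    ConvergesContinuouslyAt (fun N y => (fs N y, gs N y)) (fun y => (f y, g y)) x :=
  fun xs hxs => (hf xs hxs).prodMk_nhds (hg xs hxs)

theorem ConvergesContinuouslyAt.comp_continuousAt {fs : ℕ → Y → Z} {f : Y → Z} {g : X → Y}
    {x : X} (hf : ConvergesContinuouslyAt fs f (g x)) (hg : ContinuousAt g x) :
    ConvergesContinuouslyAt (fun N => fs N ∘ g) (f ∘ g) x :=
  fun xs hxs => hf (g ∘ xs) (hg.tendsto.comp hxs)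

theorem tendsto_extend_of_injective {φ : ℕ → ℕ} (hφ : φ.Injective) {xs : ℕ → X} {x : X}
    (hxs : Tendsto xs atTop (𝓝 x)) :
    Tendsto (Function.extend φ xs fun _ => x) atTop (𝓝 x) := by
  rw [← Nat.cofinite_eq_atTop] at hxs ⊢
  intro U hU
  refine ((hxs hU).image φ).subset fun N hN => ?_
  by_cases hφN : ∃ j, φ j = N
  · obtain ⟨j, rfl⟩ := hφN
    exact ⟨j, by simpa [hφ.extend_apply] using hN, rfl⟩
  · exact absurd (mem_of_mem_nhds hU) (by simpa [Function.extend_apply' _ _ _ hφN] using hN)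

theorem ConvergesContinuouslyAt.mem_of_forall_mem_closure [FirstCountableTopology X]
    {fs : ℕ → X → Y} {f : X → Y} {x : X} (hc : ConvergesContinuouslyAt fs f x) {F : Set Y}
    (hF : IsClosed F) (hx : ∀ M, x ∈ closure (⋃ N ≥ M, fs N ⁻¹' F)) : f x ∈ F := by
  obtain ⟨U, hU⟩ := (𝓝 x).exists_antitone_basis
  have hfreq : ∀ j, ∃ᶠ N in atTop, ∃ y ∈ U j, fs N y ∈ F := by
    refine fun j => frequently_atTop.mpr fun M => ?_
    obtain ⟨y, hyU, hy⟩ := mem_closure_iff_nhds.mp (hx M) (U j) (hU.mem j)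
    simp only [Set.mem_iUnion, Set.mem_preimage] at hy
    obtain ⟨N, hN, hyF⟩ := hy
    exact ⟨N, hN, y, hyU, hyF⟩
  obtain ⟨φ, hφ, hy⟩ := extraction_forall_of_frequently hfreq
  choose y hyU hyF using hy
  -- pad `y` with `x` off the range of `φ` to get a sequence indexed by all `N`
  have hlim := (hc _ (tendsto_extend_of_injective hφ.injective (hU.tendsto hyU))).comp
    hφ.tendsto_atTop
  simp only [Function.comp_def, hφ.injective.extend_apply] at hlim
  exact hF.mem_of_tendsto hlim (Eventually.of_forall hyF)

end ConvergesContinuouslyAt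

theorem TendstoWeakly.map {Ω E : Type*} [MeasurableSpace Ω] [TopologicalSpace Ω]
    [OpensMeasurableSpace Ω] [MeasurableSpace E] [TopologicalSpace E] [BorelSpace E]
    {μs : ℕ → Measure Ω} {μ : Measure Ω} (hconv : TendstoWeakly μs μ) {π : Ω → E}
    (hπ : Continuous π) : TendstoWeakly (fun N => (μs N).map π) (μ.map π) := fun f => by
  simp only [integral_map hπ.aemeasurable f.continuous.aestronglyMeasurable]
  exact hconv (f.compContinuous ⟨π, hπ⟩)

section WeakConvergence

variable {Ω E : Type*} [MeasurableSpace Ω] [TopologicalSpace Ω] [OpensMeasurableSpace Ω]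
  {μs : ℕ → Measure Ω} {μ : Measure Ω} [∀ N, IsProbabilityMeasure (μs N)]
  [IsProbabilityMeasure μ]

theorem TendstoWeakly.tendsto_probabilityMeasure (hconv : TendstoWeakly μs μ) :
    Tendsto (β := ProbabilityMeasure Ω) (fun N => ⟨μs N, inferInstance⟩) atTop
      (𝓝 ⟨μ, inferInstance⟩) :=
  ProbabilityMeasure.tendsto_iff_forall_integral_tendsto.mpr hconv

theorem TendstoWeakly.limsup_measure_preimage_le [TopologicalSpace.PseudoMetrizableSpace Ω]
    [TopologicalSpace E] (hconv : TendstoWeakly μs μ) {hs : ℕ → Ω → E} {h : Ω → E}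
    (hae : ∀ᵐ x ∂μ, ConvergesContinuouslyAt hs h x) {F : Set E} (hF : IsClosed F) :
    limsup (fun N => μs N (hs N ⁻¹' F)) atTop ≤ μ (h ⁻¹' F) := by
  set T : ℕ → Set Ω := fun M => closure (⋃ N ≥ M, hs N ⁻¹' F)
  have hT_anti : Antitone T := fun M M' hMM' =>
    closure_mono (Set.biUnion_mono (fun _ hN => le_trans hMM' hN) fun _ _ => le_rfl)
  have hT_le : ∀ M, limsup (fun N => μs N (hs N ⁻¹' F)) atTop ≤ μ (T M) := fun M =>
    calc limsup (fun N => μs N (hs N ⁻¹' F)) atTop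
        ≤ limsup (fun N => μs N (T M)) atTop := by
          refine limsup_le_limsup ?_
          filter_upwards [eventually_ge_atTop M] with N hN
          exact measure_mono ((Set.subset_biUnion_of_mem (u := fun N => hs N ⁻¹' F) hN).trans
            subset_closure)
      _ ≤ μ (T M) :=
          ProbabilityMeasure.limsup_measure_closed_le_of_tendsto
            hconv.tendsto_probabilityMeasure isClosed_closure
  have hT_ae : (⋂ M, T M : Set Ω) ≤ᵐ[μ] (h ⁻¹' F : Set Ω) := by
    filter_upwards [hae] with x hx hxT
    exact hx.mem_of_forall_mem_closure hF (Set.mem_iInter.mp hxT)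
  calc limsup (fun N => μs N (hs N ⁻¹' F)) atTop
      ≤ ⨅ M, μ (T M) := le_iInf hT_le
    _ = μ (⋂ M, T M) := (hT_anti.measure_iInter
          (fun _ => isClosed_closure.nullMeasurableSet) ⟨0, measure_ne_top μ _⟩).symm
    _ ≤ μ (h ⁻¹' F) := measure_mono_ae hT_ae

theorem TendstoWeakly.map_of_ae_convergesContinuouslyAt
    [TopologicalSpace.PseudoMetrizableSpace Ω] [MeasurableSpace E] [TopologicalSpace E]
    [OpensMeasurableSpace E] (hconv : TendstoWeakly μs μ) {hs : ℕ → Ω → E} {h : Ω → E}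
    (hs_meas : ∀ N, Measurable (hs N)) (h_meas : Measurable h)
    (hae : ∀ᵐ x ∂μ, ConvergesContinuouslyAt hs h x) :
    TendstoWeakly (fun N => (μs N).map (hs N)) (μ.map h) := by
  have := fun N => Measure.isProbabilityMeasure_map (μ := μs N) (hs_meas N).aemeasurable
  have := Measure.isProbabilityMeasure_map (μ := μ) h_meas.aemeasurable
  refine ProbabilityMeasure.tendsto_iff_forall_integral_tendsto.mp
    (tendsto_of_forall_isClosed_limsup_le'
      (μs := fun N => ⟨(μs N).map (hs N), inferInstance⟩) (μ := ⟨μ.map h, inferInstance⟩)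
      fun F hF => ?_)
  simp only [ProbabilityMeasure.coe_mk, Measure.map_apply (hs_meas _) hF.measurableSet,
    Measure.map_apply h_meas hF.measurableSet]
  exact hconv.limsup_measure_preimage_le hae hF

end WeakConvergence

def unitClamp : ℝ →ᵇ ℝ :=
  .ofNormedAddCommGroup (fun t => max 0 (min t 1)) (by fun_prop) 1 fun t => by
    rw [Real.norm_eq_abs, abs_le]
    constructor <;> linarith [le_max_left 0 (min t 1), max_le zero_le_one (min_le_right t 1)]

theorem integral_map_graph_mul_unitClamp {Ω : Type*} [MeasurableSpace Ω] {μ : Measure Ω}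
    {φ : Ω → ℝ} (hφ : Measurable φ) (hφ01 : ∀ x, φ x = 0 ∨ φ x = 1) {f : Ω → ℝ}
    (hf : Measurable f) :
    ∫ z, f z.1 * unitClamp z.2 ∂μ.map (fun x => (x, φ x)) = ∫ x in {x | φ x = 1}, f x ∂μ := by
  have hgraph : Measurable fun x => (x, φ x) := by fun_prop
  have hint : Measurable fun z : Ω × ℝ => f z.1 * unitClamp z.2 :=
    (hf.comp measurable_fst).mul (unitClamp.continuous.measurable.comp measurable_snd)
  rw [integral_map hgraph.aemeasurable hint.aestronglyMeasurable,
    ← integral_indicator (measurableSet_eq_fun hφ measurable_const)]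
  congr 1 with x
  rcases hφ01 x with h0 | h1
  · simp [unitClamp, h0]
  · simp [unitClamp, h1]

theorem integral_cond_eq_inv_mul_setIntegral {Ω : Type*} [MeasurableSpace Ω] (μ : Measure Ω)
    (s : Set Ω) (f : Ω → ℝ) :
    ∫ x, f x ∂μ[|s] = (μ.real s)⁻¹ * ∫ x in s, f x ∂μ := by
  rw [ProbabilityTheory.cond, integral_smul_measure, ENNReal.toReal_inv, smul_eq_mul,
    measureReal_def]

section Acceptance

variable {Ω : Type*} [MeasurableSpace Ω] [TopologicalSpace Ω] [BorelSpace Ω]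
  [TopologicalSpace.PseudoMetrizableSpace Ω] {μs : ℕ → Measure Ω} {μ : Measure Ω}
  [∀ N, IsProbabilityMeasure (μs N)] [IsProbabilityMeasure μ] {φs : ℕ → Ω → ℝ} {φ : Ω → ℝ}

theorem TendstoWeakly.tendsto_setIntegral_of_ae_convergesContinuouslyAt
    (hconv : TendstoWeakly μs μ) (hφs_meas : ∀ N, Measurable (φs N)) (hφ_meas : Measurable φ)
    (hφs01 : ∀ N x, φs N x = 0 ∨ φs N x = 1) (hφ01 : ∀ x, φ x = 0 ∨ φ x = 1)
    (hae : ∀ᵐ x ∂μ, ConvergesContinuouslyAt φs φ x) (f : Ω →ᵇ ℝ) :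
    Tendsto (fun N => ∫ x in {x | φs N x = 1}, f x ∂μs N) atTop
      (𝓝 (∫ x in {x | φ x = 1}, f x ∂μ)) := by
  have hmap := hconv.map_of_ae_convergesContinuouslyAt (hs := fun N x => (x, φs N x))
    (h := fun x => (x, φ x)) (fun N => measurable_id.prodMk (hφs_meas N))
    (measurable_id.prodMk hφ_meas)
    (hae.mono fun x hx => continuousAt_id.convergesContinuouslyAt.prodMk hx)
    (f.compContinuous ⟨Prod.fst, continuous_fst⟩ *
      unitClamp.compContinuous ⟨Prod.snd, continuous_snd⟩)
  simp only [BoundedContinuousFunction.coe_mul, Pi.mul_apply,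
    BoundedContinuousFunction.compContinuous_apply, ContinuousMap.coe_mk] at hmap
  simpa only [integral_map_graph_mul_unitClamp (hφs_meas _) (hφs01 _) f.continuous.measurable,
    integral_map_graph_mul_unitClamp hφ_meas hφ01 f.continuous.measurable] using hmap

theorem TendstoWeakly.cond_of_ae_convergesContinuouslyAt
    (hconv : TendstoWeakly μs μ) (hφs_meas : ∀ N, Measurable (φs N)) (hφ_meas : Measurable φ)
    (hφs01 : ∀ N x, φs N x = 0 ∨ φs N x = 1) (hφ01 : ∀ x, φ x = 0 ∨ φ x = 1)
    (hae : ∀ᵐ x ∂μ, ConvergesContinuouslyAt φs φ x) (hpos : 0 < μ {x | φ x = 1}) :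
    Tendsto (fun N => μs N {x | φs N x = 1}) atTop (𝓝 (μ {x | φ x = 1})) ∧
      TendstoWeakly (fun N => (μs N)[|{x | φs N x = 1}]) μ[|{x | φ x = 1}] := by
  have hset := hconv.tendsto_setIntegral_of_ae_convergesContinuouslyAt hφs_meas hφ_meas hφs01
    hφ01 hae
  have hreal : Tendsto (fun N => (μs N).real {x | φs N x = 1}) atTop
      (𝓝 (μ.real {x | φ x = 1})) := by
    simpa using hset 1
  refine ⟨(ENNReal.tendsto_toReal_iff (fun _ => measure_ne_top _ _) (measure_ne_top _ _)).mp
    hreal, fun f => ?_⟩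
  simp only [integral_cond_eq_inv_mul_setIntegral]
  exact (hreal.inv₀ (ENNReal.toReal_pos hpos.ne' (measure_ne_top _ _)).ne').mul (hset f)

end Acceptance

theorem weak_convergence_under_ReG
    {p m k : ℕ}
    (μs : ℕ → Measure ((Fin p → ℝ) × (Fin m → ℝ) × (Fin k → ℝ)))
    (μ : Measure ((Fin p → ℝ) × (Fin m → ℝ) × (Fin k → ℝ)))
    (hμs : ∀ N, IsProbabilityMeasure (μs N)) (hμ : IsProbabilityMeasure μ)
    (hconv : TendstoWeakly μs μ)
    (φs : ℕ → (Fin m → ℝ) × (Fin k → ℝ) → ℝ) (φ : (Fin m → ℝ) × (Fin k → ℝ) → ℝ)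
    (hφs_meas : ∀ N, Measurable (φs N)) (hφ_meas : Measurable φ)
    (hφs01 : ∀ N y, φs N y = 0 ∨ φs N y = 1) (hφ01 : ∀ y, φ y = 0 ∨ φ y = 1)
    (hcont : ∀ᵐ y ∂(μ.map (fun x => (x.2.1, x.2.2))),
      ∀ ys : ℕ → (Fin m → ℝ) × (Fin k → ℝ), Tendsto ys atTop (𝓝 y) →
        Tendsto (fun N => φs N (ys N)) atTop (𝓝 (φ y)))
    (hpos : 0 < μ {x | φ (x.2.1, x.2.2) = 1}) :
    -- acceptance probabilities converge
    Tendsto (fun N => μs N {x | φs N (x.2.1, x.2.2) = 1}) atTop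
        (𝓝 (μ {x | φ (x.2.1, x.2.2) = 1}))
    -- conditional laws of (A_N, B_N) converge weakly
    ∧ TendstoWeakly
        (fun N => ((μs N)[|{x | φs N (x.2.1, x.2.2) = 1}]).map (fun x => (x.1, x.2.1)))
        ((μ[|{x | φ (x.2.1, x.2.2) = 1}]).map (fun x => (x.1, x.2.1))) := by
  have hBC : Continuous fun x : (Fin p → ℝ) × (Fin m → ℝ) × (Fin k → ℝ) => (x.2.1, x.2.2) := by
    fun_prop
  have hae : ∀ᵐ x ∂μ, ConvergesContinuouslyAt (fun N => φs N ∘ fun x => (x.2.1, x.2.2))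
      (φ ∘ fun x => (x.2.1, x.2.2)) x :=
    (ae_of_ae_map hBC.aemeasurable hcont).mono fun x hx =>
      ConvergesContinuouslyAt.comp_continuousAt hx hBC.continuousAt
  obtain ⟨hacc, hcond⟩ := hconv.cond_of_ae_convergesContinuouslyAt
    (fun N => (hφs_meas N).comp hBC.measurable) (hφ_meas.comp hBC.measurable)
    (fun N x => hφs01 N _) (fun x => hφ01 _) hae hpos
  exact ⟨hacc, hcond.map (π := fun x => (x.1, x.2.1)) (by fun_prop)⟩
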